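/- Let k be a field of characteristic 2 and consider the n² × n² matrix T = I_n ⊗ N_n + N_n ⊗ I_n (Kronecker sum of the identity with the size-n nilpotent upper-triangular Jordan block). Then rank(T) = n² − n. -/

import Mathlib

/-!
In characteristic 2 the equation `T x = 0` reads `x (a, b + 1) = x (a + 1, b)` for all `a, b`,
where `x` is extended by zero outside `[0, n) × [0, n)`. Hence `x (a, b) = x (a + b, 0)`: the
kernel consists of the vectors constant along antidiagonals and vanishing on those with
`a + b ≥ n`, so it is `n`-dimensional and rank–nullity gives `rank T = n² - n`.
-/

open Matrix Kronecker

def shiftMat (k : Type*) [Semiring k] (n : ℕ) : Matrix (Fin n) (Fin n) k :=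
  Matrix.of fun i j => if (i : ℕ) + 1 = (j : ℕ) then 1 else 0

namespace Matrix

variable {α l m n : Type*} [Semiring α] [Fintype n]

theorem one_kronecker_mulVec_apply [Fintype l] [DecidableEq l] (B : Matrix m n α)
    (x : l × n → α) (a : l) (b : m) :
    (((1 : Matrix l l α) ⊗ₖ B) *ᵥ x) (a, b) = (B *ᵥ fun j => x (a, j)) b := by
  simp [mulVec, dotProduct, kroneckerMap_apply, one_apply, Fintype.sum_prod_type, ite_mul]

theorem kronecker_one_mulVec_apply [Fintype m] [DecidableEq m] (A : Matrix l n α)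
    (x : n × m → α) (a : l) (b : m) :
    ((A ⊗ₖ (1 : Matrix m m α)) *ᵥ x) (a, b) = (A *ᵥ fun i => x (i, b)) a := by
  simp [mulVec, dotProduct, kroneckerMap_apply, one_apply, Fintype.sum_prod_type, mul_ite]

end Matrix

theorem apply_eq_apply_add_zero_of_apply_succ_eq {β : Type*} {g : ℕ → ℕ → β}
    (hg : ∀ a b, g a (b + 1) = g (a + 1) b) (a b : ℕ) : g a b = g (a + b) 0 := by
  induction b generalizing a with
  | zero => rfl
  | succ b ih => rw [hg, ih, Nat.add_right_comm, Nat.add_assoc]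

section ShiftKroneckerSum

variable {k : Type*} {n : ℕ}

theorem shiftMat_mulVec_apply [Semiring k] (v : Fin n → k) (i : Fin n) :
    (shiftMat k n *ᵥ v) i = if h : (i : ℕ) + 1 < n then v ⟨i + 1, h⟩ else 0 := by
  simp only [mulVec, dotProduct, shiftMat, of_apply, ite_mul, one_mul, zero_mul]
  split_ifs with h
  · simp only [← Fin.ext_iff (a := ⟨i + 1, h⟩), Finset.sum_ite_eq, Finset.mem_univ, if_true]
  · exact Finset.sum_eq_zero fun j _ => if_neg fun hj : (i : ℕ) + 1 = j => h (hj ▸ j.isLt)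

variable (k n)

abbrev shiftKroneckerSum [Semiring k] : Matrix (Fin n × Fin n) (Fin n × Fin n) k :=
  1 ⊗ₖ shiftMat k n + shiftMat k n ⊗ₖ 1

/-- `f ↦ ((a, b) ↦ f (a + b))`, with `f` extended by zero past `n - 1`. -/
def antidiagonalLift [Semiring k] : (Fin n → k) →ₗ[k] (Fin n × Fin n → k) :=
  LinearMap.pi fun p => if h : (p.1 : ℕ) + p.2 < n then LinearMap.proj ⟨p.1 + p.2, h⟩ else 0

variable {k n}

theorem antidiagonalLift_apply [Semiring k] (f : Fin n → k) (p : Fin n × Fin n) :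
    antidiagonalLift k n f p = if h : (p.1 : ℕ) + p.2 < n then f ⟨p.1 + p.2, h⟩ else 0 := by
  rw [antidiagonalLift, LinearMap.pi_apply]
  split_ifs <;> rfl

theorem antidiagonalLift_injective [Semiring k] : Function.Injective (antidiagonalLift k n) :=
  fun f g hfg => funext fun i => by
    simpa [antidiagonalLift_apply] using congrFun hfg (i, ⟨0, i.pos⟩)

def extendByZero [Zero k] (x : Fin n × Fin n → k) (a b : ℕ) : k :=
  if h : a < n ∧ b < n then x (⟨a, h.1⟩, ⟨b, h.2⟩) else 0

theorem extendByZero_antidiagonalLift [Semiring k] (f : Fin n → k) (a b : ℕ) :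
    extendByZero (antidiagonalLift k n f) a b = if h : a + b < n then f ⟨a + b, h⟩ else 0 := by
  by_cases h : a + b < n
  · simp [extendByZero, antidiagonalLift_apply, h, show a < n ∧ b < n by omega]
  · simp [extendByZero, antidiagonalLift_apply, h]

theorem shiftKroneckerSum_mulVec_apply [Semiring k] (x : Fin n × Fin n → k) (a b : Fin n) :
    (shiftKroneckerSum k n *ᵥ x) (a, b) =
      extendByZero x a (b + 1) + extendByZero x (a + 1) b := by
  simp [add_mulVec, one_kronecker_mulVec_apply, kronecker_one_mulVec_apply,
    shiftMat_mulVec_apply, extendByZero]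

theorem mem_ker_shiftKroneckerSum_iff [CommRing k] [CharP k 2] (x : Fin n × Fin n → k) :
    x ∈ LinearMap.ker (shiftKroneckerSum k n).mulVecLin ↔
      ∀ a b : ℕ, extendByZero x a (b + 1) = extendByZero x (a + 1) b := by
  rw [LinearMap.mem_ker, mulVecLin_apply]
  constructor
  · intro hx a b
    by_cases hab : a < n ∧ b < n
    · have := congrFun hx (⟨a, hab.1⟩, ⟨b, hab.2⟩)
      rwa [shiftKroneckerSum_mulVec_apply, Pi.zero_apply, CharTwo.add_eq_zero] at this
    · have : ¬(a < n ∧ b + 1 < n) ∧ ¬(a + 1 < n ∧ b < n) := by omega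
      simp only [extendByZero, dif_neg this.1, dif_neg this.2]
  · intro hx
    funext ⟨a, b⟩
    rw [shiftKroneckerSum_mulVec_apply, hx, CharTwo.add_self_eq_zero, Pi.zero_apply]

theorem ker_shiftKroneckerSum [CommRing k] [CharP k 2] :
    LinearMap.ker (shiftKroneckerSum k n).mulVecLin = LinearMap.range (antidiagonalLift k n) := by
  ext x
  rw [mem_ker_shiftKroneckerSum_iff]
  constructor
  · intro hx
    refine ⟨fun i => x (i, ⟨0, i.pos⟩), funext fun ⟨a, b⟩ => ?_⟩
    have hab := apply_eq_apply_add_zero_of_apply_succ_eq hx a b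
    simp only [extendByZero, a.isLt, b.isLt, and_self, dif_pos] at hab
    rw [antidiagonalLift_apply, hab]
    by_cases h : (a : ℕ) + b < n <;> simp [h, a.pos]
  · rintro ⟨f, rfl⟩ a b
    simp only [extendByZero_antidiagonalLift, ← add_assoc, add_right_comm a 1 b]

theorem rank_shiftKroneckerSum [Field k] [CharP k 2] :
    (shiftKroneckerSum k n).rank = n ^ 2 - n := by
  have hker : Module.finrank k (LinearMap.ker (shiftKroneckerSum k n).mulVecLin) = n := by
    rw [ker_shiftKroneckerSum, LinearMap.finrank_range_of_inj antidiagonalLift_injective,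
      Module.finrank_fin_fun]
  have := LinearMap.finrank_range_add_finrank_ker (shiftKroneckerSum k n).mulVecLin
  rw [hker, Module.finrank_fintype_fun_eq_card, Fintype.card_prod, Fintype.card_fin] at this
  rw [rank, sq]
  omega

end ShiftKroneckerSum

/-- over a field of characteristic 2, the Kronecker sum
`T = I_n ⊗ N_n + N_n ⊗ I_n` has rank `n² − n`. -/
theorem rank_kronecker_sum_char_two
    (k : Type*) [Field k] [CharP k 2] (n : ℕ) :
    (Matrix.kroneckerMap (· * ·) (1 : Matrix (Fin n) (Fin n) k) (shiftMat k n) +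
      Matrix.kroneckerMap (· * ·) (shiftMat k n) (1 : Matrix (Fin n) (Fin n) k)).rank
      = n ^ 2 - n :=
  rank_shiftKroneckerSum
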